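/- arXiv:2602.21210 — 10 statements merged into one kernel-verified Lean document; each statement's English description precedes it below -/
import Mathlib

section
/- Let A be a δ-Lie algebra over ℂ (an anticommutative algebra satisfying the δ-Lie identity) with δ ≠ 1. Then A is antiassociative, i.e., (x*y)*z = −x*(y*z) for all x, y, z ∈ A. -/
/-! Put `a = (xy)z` and `d = (yz)x = -x(yz)`. The δ-Lie identity at `(x, y, z)` and at the cyclic
shift `(y, z, x)` express `a` and `d` through the same third product `(xz)y`; subtracting the two
gives `a - d = δ • (a - d)`, so `a = d` as soon as `δ ≠ 1`. -/

section DeltaLie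

variable {K A : Type*} [Field K] [AddCommGroup A] [Module K A]
  (mul : A →ₗ[K] A →ₗ[K] A) {δ : K}

theorem mul_mul_eq_smul_sub_of_deltaLie
    (anticomm : ∀ x y : A, mul x y = - mul y x)
    (dlie : ∀ x y z : A, mul (mul x y) z = δ • (mul (mul x z) y + mul x (mul y z)))
    (x y z : A) :
    mul (mul x y) z = δ • (mul (mul x z) y - mul (mul y z) x) := by
  rw [dlie, anticomm x (mul y z), sub_eq_add_neg]

theorem sub_cyclic_eq_smul_of_deltaLie
    (anticomm : ∀ x y : A, mul x y = - mul y x)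
    (dlie : ∀ x y z : A, mul (mul x y) z = δ • (mul (mul x z) y + mul x (mul y z)))
    (x y z : A) :
    mul (mul x y) z - mul (mul y z) x = δ • (mul (mul x y) z - mul (mul y z) x) := by
  have hxyz := mul_mul_eq_smul_sub_of_deltaLie mul anticomm dlie x y z
  have hyzx := mul_mul_eq_smul_sub_of_deltaLie mul anticomm dlie y z x
  have hyx : mul (mul y x) z = - mul (mul x y) z := by
    rw [anticomm y x, map_neg, LinearMap.neg_apply]
  have hzx : mul (mul z x) y = - mul (mul x z) y := by
    rw [anticomm z x, map_neg, LinearMap.neg_apply]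
  rw [hyx, hzx] at hyzx
  linear_combination (norm := module) hxyz - hyzx

theorem eq_zero_of_eq_smul_self {v : A} (hδ : δ ≠ 1) (h : v = δ • v) : v = 0 := by
  by_contra hv
  exact hδ (smul_left_injective K hv (show δ • v = (1 : K) • v by rw [one_smul]; exact h.symm))

theorem antiassociative_of_deltaLie (hδ : δ ≠ 1)
    (anticomm : ∀ x y : A, mul x y = - mul y x)
    (dlie : ∀ x y z : A, mul (mul x y) z = δ • (mul (mul x z) y + mul x (mul y z)))
    (x y z : A) :
    mul (mul x y) z = - mul x (mul y z) := by
  have h := eq_zero_of_eq_smul_self hδ (sub_cyclic_eq_smul_of_deltaLie mul anticomm dlie x y z)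
  rw [sub_eq_zero] at h
  rw [h, anticomm x, neg_neg]

end DeltaLie

/-- A δ-Lie algebra over ℂ (anticommutative, satisfying the δ-Lie
identity) with δ ≠ 1 is antiassociative. -/
theorem deltaLie_antiassociative
    (A : Type*) [AddCommGroup A] [Module ℂ A]
    (mul : A →ₗ[ℂ] A →ₗ[ℂ] A) (δ : ℂ) (hδ : δ ≠ 1)
    (anticomm : ∀ x y : A, mul x y = - mul y x)
    (dlie : ∀ x y z : A,
      mul (mul x y) z = δ • (mul (mul x z) y + mul x (mul y z))) :
    ∀ x y z : A, mul (mul x y) z = - mul x (mul y z) :=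
  antiassociative_of_deltaLie mul hδ anticomm dlie
end

section
/- Let A be an anticommutative antiassociative algebra over ℂ. Then A is a (−1/2)-Lie algebra, i.e., (x*y)*z = (−1/2)*((x*z)*y + x*(y*z)) for all x, y, z ∈ A. -/
theorem mul_mul_swap_of_anticomm_of_antiassoc {R M : Type*} [CommRing R] [AddCommGroup M]
    [Module R M] (mul : M →ₗ[R] M →ₗ[R] M)
    (anticomm : ∀ x y : M, mul x y = - mul y x)
    (antiassoc : ∀ x y z : M, mul (mul x y) z = - mul x (mul y z)) (x y z : M) :
    mul (mul x z) y = mul x (mul y z) := by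
  rw [antiassoc x z y, anticomm z y, map_neg, neg_neg]

/-- An anticommutative antiassociative algebra over ℂ is a
(−1/2)-Lie algebra. -/
theorem anticomm_antiassoc_is_negHalfLie
    (A : Type*) [AddCommGroup A] [Module ℂ A]
    (mul : A →ₗ[ℂ] A →ₗ[ℂ] A)
    (anticomm : ∀ x y : A, mul x y = - mul y x)
    (antiassoc : ∀ x y z : A, mul (mul x y) z = - mul x (mul y z)) :
    ∀ x y z : A,
      mul (mul x y) z = (-(1/2) : ℂ) • (mul (mul x z) y + mul x (mul y z)) := by
  intro x y z
  rw [antiassoc x y z, mul_mul_swap_of_anticomm_of_antiassoc mul anticomm antiassoc x y z]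
  module
end

section
/- Let A be a δ-Lie algebra over ℂ with δ ≠ 1 and δ ≠ −1/2. Then A is 2-step nilpotent, i.e., (x*y)*z = 0 for all x, y, z ∈ A. -/
/-!
Write `J(x, y, z) = (xy)z + (yz)x + (zx)y`. Anticommutativity turns the δ-Lie identity into
`(xy)z = -δ ((yz)x + (zx)y)`, i.e. `(1 - δ) (xy)z = -δ J(x, y, z)`. Summing this over the cyclic
permutations of `(x, y, z)` gives `(1 + 2δ) J = 0`, so `J = 0` when `δ ≠ -1/2`, and then
`(1 - δ) (xy)z = 0` forces `(xy)z = 0` when `δ ≠ 1`.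
-/

section DeltaLie

variable {R M : Type*} [CommRing R] [AddCommGroup M] [Module R M]

structure IsDeltaLie (mul : M →ₗ[R] M →ₗ[R] M) (δ : R) : Prop where
  anticomm : ∀ x y, mul x y = -mul y x
  delta_lie : ∀ x y z, mul (mul x y) z = δ • (mul (mul x z) y + mul x (mul y z))

def jacobiator (mul : M →ₗ[R] M →ₗ[R] M) (x y z : M) : M :=
  mul (mul x y) z + mul (mul y z) x + mul (mul z x) y

namespace IsDeltaLie

variable {mul : M →ₗ[R] M →ₗ[R] M} {δ : R}

theorem one_sub_smul_mul_mul (h : IsDeltaLie mul δ) (x y z : M) :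
    (1 - δ) • mul (mul x y) z = -δ • jacobiator mul x y z := by
  have hxyz : mul (mul x y) z = δ • (-mul (mul z x) y + -mul (mul y z) x) := by
    rw [h.delta_lie x y z, h.anticomm x z, h.anticomm x (mul y z), map_neg,
      LinearMap.neg_apply]
  simp only [jacobiator]
  linear_combination (norm := module) hxyz

theorem one_add_two_mul_smul_jacobiator (h : IsDeltaLie mul δ) (x y z : M) :
    (1 + 2 * δ) • jacobiator mul x y z = 0 := by
  have hx := h.one_sub_smul_mul_mul x y z
  have hy := h.one_sub_smul_mul_mul y z x
  have hz := h.one_sub_smul_mul_mul z x y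
  have hsum : (1 - δ) • jacobiator mul x y z = (-3 * δ) • jacobiator mul x y z := by
    simp only [jacobiator] at hx hy hz ⊢
    linear_combination (norm := module) hx + hy + hz
  linear_combination (norm := module) hsum

theorem mul_mul_eq_zero [IsDomain R] [Module.IsTorsionFree R M] (h : IsDeltaLie mul δ)
    (hδ1 : δ ≠ 1) (hδ2 : 1 + 2 * δ ≠ 0) (x y z : M) : mul (mul x y) z = 0 := by
  have hJ : jacobiator mul x y z = 0 :=
    (smul_eq_zero.mp (h.one_add_two_mul_smul_jacobiator x y z)).resolve_left hδ2
  have hxyz := h.one_sub_smul_mul_mul x y z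
  rw [hJ, smul_zero] at hxyz
  exact (smul_eq_zero.mp hxyz).resolve_left (sub_ne_zero.mpr hδ1.symm)

end IsDeltaLie

end DeltaLie

/-- A δ-Lie algebra over ℂ with δ ≠ 1 and δ ≠ −1/2 is
2-step nilpotent. -/
theorem deltaLie_two_step_nilpotent
    (A : Type*) [AddCommGroup A] [Module ℂ A]
    (mul : A →ₗ[ℂ] A →ₗ[ℂ] A) (δ : ℂ) (hδ1 : δ ≠ 1) (hδ2 : δ ≠ -(1/2))
    (anticomm : ∀ x y : A, mul x y = - mul y x)
    (dlie : ∀ x y z : A,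
      mul (mul x y) z = δ • (mul (mul x z) y + mul x (mul y z))) :
    ∀ x y z : A, mul (mul x y) z = 0 := by
  have hδ2' : 1 + 2 * δ ≠ 0 := fun h ↦ hδ2 (by linear_combination h / 2)
  exact IsDeltaLie.mul_mul_eq_zero ⟨anticomm, dlie⟩ hδ1 hδ2'
end

section
/- Let A be an algebra over ℂ satisfying the anti-right-alternative identity (x*y)*z + x*(y*z) = −((x*z)*y + x*(z*y)) for all x, y, z ∈ A. Then A is Jacobi–Jordan admissible: defining x∘y := x*y + y*x, one has x∘(y∘z) + y∘(z∘x) + z∘(x∘y) = 0 for all x, y, z ∈ A. -/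
/-!
Expanding `∘`, the cyclic sum `x∘(y∘z) + y∘(z∘x) + z∘(x∘y)` is the sum of the `(-1)`-associators
of `x, y, z` in all six orders. Anti-right-alternativity makes these cancel in pairs, each pair
differing by a swap of the last two arguments.
-/

/-- The symmetrized product x∘y := x*y + y*x of a (non-associative)
ℂ-algebra. -/
def symProd {A : Type*} [AddCommGroup A] [Module ℂ A]
    (mul : A →ₗ[ℂ] A →ₗ[ℂ] A) (x y : A) : A :=
  mul x y + mul y x

/-- The `(-1)`-associator `(x, y, z)₋₁`. -/
def negAssociator {R A : Type*} [CommSemiring R] [AddCommMonoid A] [Module R A]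
    (mul : A →ₗ[R] A →ₗ[R] A) (x y z : A) : A :=
  mul (mul x y) z + mul x (mul y z)

theorem symProd_cyclic_sum_eq_sum_negAssociator {A : Type*} [AddCommGroup A] [Module ℂ A]
    (mul : A →ₗ[ℂ] A →ₗ[ℂ] A) (x y z : A) :
    symProd mul x (symProd mul y z) + symProd mul y (symProd mul z x) +
        symProd mul z (symProd mul x y) =
      (negAssociator mul x y z + negAssociator mul x z y) +
        (negAssociator mul y z x + negAssociator mul y x z) +
        (negAssociator mul z x y + negAssociator mul z y x) := by
  simp only [symProd, negAssociator, map_add, LinearMap.add_apply]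
  abel

/-- An algebra over ℂ satisfying the anti-right-alternative
identity is Jacobi–Jordan admissible: the symmetrized product satisfies
x∘(y∘z) + y∘(z∘x) + z∘(x∘y) = 0. -/
theorem antiRightAlternative_JacobiJordan_admissible
    (A : Type*) [AddCommGroup A] [Module ℂ A]
    (mul : A →ₗ[ℂ] A →ₗ[ℂ] A)
    (ara : ∀ x y z : A,
      mul (mul x y) z + mul x (mul y z)
        = -(mul (mul x z) y + mul x (mul z y))) :
    ∀ x y z : A,
      symProd mul x (symProd mul y z) + symProd mul y (symProd mul z x) +
        symProd mul z (symProd mul x y) = 0 := by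
  have swap_cancel (a b c : A) : negAssociator mul a b c + negAssociator mul a c b = 0 :=
    eq_neg_iff_add_eq_zero.mp (ara a b c)
  intro x y z
  rw [symProd_cyclic_sum_eq_sum_negAssociator, swap_cancel, swap_cancel, swap_cancel,
    add_zero, add_zero]
end

section
/- Let A be an algebra over ℂ and δ₁, δ₂ ∈ ℂ with δ₁ ≠ δ₂. If A is both a δ₁-Leibniz algebra and a δ₂-Leibniz algebra, then A is 2-step nilpotent: (x*y)*z = 0 and x*(y*z) = 0 for all x, y, z ∈ A. -/
/-!
Subtracting the two Leibniz identities gives `(δ₁ - δ₂) • ((x*z)*y + x*(y*z)) = 0`, so the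
bracket vanishes. Substituting back, `(x*y)*z = δ₁ • 0 = 0`, and then the vanishing bracket
forces `x*(y*z) = 0` as well.
-/

section

variable {R A : Type*} [Ring R] [AddCommGroup A] [Module R A]

def IsDeltaLeibniz (mul : A → A → A) (δ : R) : Prop :=
  ∀ x y z, mul (mul x y) z = δ • (mul (mul x z) y + mul x (mul y z))

def IsTwoStepNilpotent (mul : A → A → A) : Prop :=
  ∀ x y z, mul (mul x y) z = 0 ∧ mul x (mul y z) = 0

namespace IsDeltaLeibniz

variable [IsCancelMulZero R] [Module.IsTorsionFree R A] {mul : A → A → A} {δ₁ δ₂ : R}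

theorem add_eq_zero_of_ne (h₁ : IsDeltaLeibniz mul δ₁) (h₂ : IsDeltaLeibniz mul δ₂)
    (hδ : δ₁ ≠ δ₂) (x y z : A) : mul (mul x z) y + mul x (mul y z) = 0 := by
  by_contra hne
  exact hδ <| smul_left_injective R hne <| (h₁ x y z).symm.trans (h₂ x y z)

theorem isTwoStepNilpotent_of_ne (h₁ : IsDeltaLeibniz mul δ₁) (h₂ : IsDeltaLeibniz mul δ₂)
    (hδ : δ₁ ≠ δ₂) : IsTwoStepNilpotent mul := by
  have hsum := add_eq_zero_of_ne h₁ h₂ hδ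
  have hleft : ∀ x y z, mul (mul x y) z = 0 := fun x y z => by
    rw [h₁ x y z, hsum, smul_zero]
  intro x y z
  refine ⟨hleft x y z, ?_⟩
  simpa only [hleft, zero_add] using hsum x y z

end IsDeltaLeibniz

end

/-- An algebra over ℂ that is simultaneously a δ₁-Leibniz algebra
and a δ₂-Leibniz algebra for δ₁ ≠ δ₂ is 2-step nilpotent. -/
theorem two_delta_Leibniz_two_step_nilpotent
    (A : Type*) [AddCommGroup A] [Module ℂ A]
    (mul : A →ₗ[ℂ] A →ₗ[ℂ] A) (δ₁ δ₂ : ℂ) (hδ : δ₁ ≠ δ₂)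
    (hL1 : ∀ x y z : A,
      mul (mul x y) z = δ₁ • (mul (mul x z) y + mul x (mul y z)))
    (hL2 : ∀ x y z : A,
      mul (mul x y) z = δ₂ • (mul (mul x z) y + mul x (mul y z))) :
    ∀ x y z : A, mul (mul x y) z = 0 ∧ mul x (mul y z) = 0 :=
  IsDeltaLeibniz.isTwoStepNilpotent_of_ne (mul := fun x y => mul x y) hL1 hL2 hδ
end

section
/- Let A be a δ-Leibniz algebra over ℂ with δ ≠ −1. Then A is a (δ/(1+δ))-right-symmetric algebra: for all x, y, z ∈ A, (x*y)*z − (δ/(1+δ))*(x*(y*z)) = (x*z)*y − (δ/(1+δ))*(x*(z*y)). -/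
/-!
Subtracting the δ-Leibniz identity for `(x, z, y)` from the one for `(x, y, z)` gives
`(1 + δ) • ((x*y)*z - (x*z)*y) = δ • (x*(y*z) - x*(z*y))`; dividing by `1 + δ` is exactly
the symmetry of the `δ/(1+δ)`-associator in its last two arguments.
-/

section DeltaLeibniz

variable {R A : Type*} [AddCommGroup A]

theorem one_add_smul_sub_eq_smul_sub_of_deltaLeibniz [CommRing R] [Module R A]
    (mul : A →ₗ[R] A →ₗ[R] A) (δ : R)
    (hL : ∀ x y z : A, mul (mul x y) z = δ • (mul (mul x z) y + mul x (mul y z)))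
    (x y z : A) :
    (1 + δ) • (mul (mul x y) z - mul (mul x z) y)
      = δ • (mul x (mul y z) - mul x (mul z y)) := by
  linear_combination (norm := module) hL x y z - hL x z y

theorem rightSymmetric_of_deltaLeibniz [Field R] [Module R A]
    (mul : A →ₗ[R] A →ₗ[R] A) (δ : R) (hδ : 1 + δ ≠ 0)
    (hL : ∀ x y z : A, mul (mul x y) z = δ • (mul (mul x z) y + mul x (mul y z)))
    (x y z : A) :
    mul (mul x y) z - (δ / (1 + δ)) • mul x (mul y z)
      = mul (mul x z) y - (δ / (1 + δ)) • mul x (mul z y) := by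
  apply smul_right_injective A hδ
  simp only [smul_sub, smul_smul, mul_div_cancel₀ _ hδ]
  linear_combination (norm := module)
    one_add_smul_sub_eq_smul_sub_of_deltaLeibniz mul δ hL x y z

end DeltaLeibniz

/-- A δ-Leibniz algebra over ℂ with δ ≠ −1 is a
(δ/(1+δ))-right-symmetric algebra. -/
theorem deltaLeibniz_rightSymmetric
    (A : Type*) [AddCommGroup A] [Module ℂ A]
    (mul : A →ₗ[ℂ] A →ₗ[ℂ] A) (δ : ℂ) (hδ : δ ≠ -1)
    (hL : ∀ x y z : A,
      mul (mul x y) z = δ • (mul (mul x z) y + mul x (mul y z))) :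
    ∀ x y z : A,
      mul (mul x y) z - (δ / (1 + δ)) • mul x (mul y z)
        = mul (mul x z) y - (δ / (1 + δ)) • mul x (mul z y) :=
  rightSymmetric_of_deltaLeibniz mul δ (fun h => hδ (eq_neg_of_add_eq_zero_right h)) hL
end

section
/- Let A be a δ-Leibniz algebra over ℂ with δ ≠ 0. Then A is Lie admissible (the commutator [a,b] := a*b − b*a satisfies the Jacobi identity [[x,y],z] + [[y,z],x] + [[z,x],y] = 0 for all x,y,z) if and only if A satisfies (x*y)*z − (y*x)*z + (y*z)*x − (z*y)*x + (z*x)*y − (x*z)*y = 0 for all x, y, z ∈ A. -/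
section DeltaLeibniz

variable {R A : Type*} [CommRing R] [AddCommGroup A] [Module R A]
  (mul : A →ₗ[R] A →ₗ[R] A) {δ : R}

theorem smul_mul_mul_eq_of_deltaLeibniz
    (hL : ∀ x y z : A, mul (mul x y) z = δ • (mul (mul x z) y + mul x (mul y z)))
    (x y z : A) : δ • mul x (mul y z) = mul (mul x y) z - δ • mul (mul x z) y := by
  rw [hL, smul_add, add_sub_cancel_left]

/-- After eliminating every right-nested product `a(bc)` with the δ-Leibniz identity,
all terms `δ (ab)c` cancel. -/
theorem smul_jacobi_commutator_eq_neg_of_deltaLeibniz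
    (hL : ∀ x y z : A, mul (mul x y) z = δ • (mul (mul x z) y + mul x (mul y z)))
    (x y z : A) :
    δ • ((mul (mul x y - mul y x) z - mul z (mul x y - mul y x)) +
        (mul (mul y z - mul z y) x - mul x (mul y z - mul z y)) +
        (mul (mul z x - mul x z) y - mul y (mul z x - mul x z))) =
      -(mul (mul x y) z - mul (mul y x) z + mul (mul y z) x - mul (mul z y) x +
          mul (mul z x) y - mul (mul x z) y) := by
  have h := smul_mul_mul_eq_of_deltaLeibniz mul hL
  simp only [map_sub, LinearMap.sub_apply, smul_add, smul_sub]
  rw [h z x y, h z y x, h x y z, h x z y, h y z x, h y x z]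
  module

end DeltaLeibniz

/-- A δ-Leibniz algebra over ℂ with δ ≠ 0 is Lie admissible iff
it satisfies (xy)z − (yx)z + (yz)x − (zy)x + (zx)y − (xz)y = 0. -/
theorem deltaLeibniz_lieAdmissible_iff
    (A : Type*) [AddCommGroup A] [Module ℂ A]
    (mul : A →ₗ[ℂ] A →ₗ[ℂ] A) (δ : ℂ) (hδ : δ ≠ 0)
    (hL : ∀ x y z : A,
      mul (mul x y) z = δ • (mul (mul x z) y + mul x (mul y z))) :
    (∀ x y z : A,
        (mul (mul x y - mul y x) z - mul z (mul x y - mul y x)) +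
        (mul (mul y z - mul z y) x - mul x (mul y z - mul z y)) +
        (mul (mul z x - mul x z) y - mul y (mul z x - mul x z)) = 0) ↔
    (∀ x y z : A,
        mul (mul x y) z - mul (mul y x) z + mul (mul y z) x - mul (mul z y) x +
          mul (mul z x) y - mul (mul x z) y = 0) := by
  have key := smul_jacobi_commutator_eq_neg_of_deltaLeibniz mul hL
  constructor
  · intro hJacobi x y z
    rw [← neg_eq_zero, ← key, hJacobi, smul_zero]
  · intro hCyclic x y z
    have h := key x y z
    rw [hCyclic, neg_zero] at h
    exact (smul_eq_zero.mp h).resolve_left hδ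
end

section
/- Let A be a symmetric δ-Leibniz algebra over ℂ, and write x² := x*x. Then: (A) if δ ≠ 1/2, then x²*x = 0, x*x² = 0 and x²*x² = 0 for all x ∈ A (hence xⁿ = 0 for all n > 2, i.e., A is a nilalgebra of nilindex 3); (B) if δ = 1/2, then x²*x = x*x² and x²*x² = (x²*x)*x for all x ∈ A (hence, by Albert's criterion, A is power-associative). -/
/-!
Both identities at `(x, x, x)` rewrite `x²x`, and comparing them gives `x²x = x·x²`;
feeding this back into the right identity leaves `(1 - 2δ) x²x = 0`. The right identity at
`(x², x, x)` then ties `x²x²` to `(x²x)x`, which for `δ = 1/2` is Albert's second condition,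
while for `δ ≠ 1/2` the vanishing of `x·x² = x²x` kills `x²x²` through the right identity at `(x, x, x²)`.
-/

section DeltaLeibniz

variable {R M : Type*} [CommRing R] [AddCommGroup M] [Module R M]

def IsRightDeltaLeibniz (mul : M →ₗ[R] M →ₗ[R] M) (δ : R) : Prop :=
  ∀ x y z : M, mul (mul x y) z = δ • (mul (mul x z) y + mul x (mul y z))

def IsLeftDeltaLeibniz (mul : M →ₗ[R] M →ₗ[R] M) (δ : R) : Prop :=
  ∀ x y z : M, mul x (mul y z) = δ • (mul (mul x y) z + mul y (mul x z))

variable {mul : M →ₗ[R] M →ₗ[R] M} {δ : R}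

theorem sq_mul_eq_mul_sq (hR : IsRightDeltaLeibniz mul δ) (hL : IsLeftDeltaLeibniz mul δ)
    (x : M) : mul (mul x x) x = mul x (mul x x) :=
  (hR x x x).trans (hL x x x).symm

theorem one_sub_two_mul_smul_sq_mul_eq_zero (hR : IsRightDeltaLeibniz mul δ)
    (hL : IsLeftDeltaLeibniz mul δ) (x : M) : (1 - 2 * δ) • mul (mul x x) x = 0 := by
  have h := hR x x x
  rw [← sq_mul_eq_mul_sq hR hL x] at h
  linear_combination (norm := module) h

theorem sq_mul_eq_zero (hR : IsRightDeltaLeibniz mul δ) (hL : IsLeftDeltaLeibniz mul δ)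
    (hδ : IsUnit (1 - 2 * δ)) (x : M) : mul (mul x x) x = 0 :=
  (hδ.smul_eq_zero).mp (one_sub_two_mul_smul_sq_mul_eq_zero hR hL x)

theorem sq_mul_sq_eq_zero (hR : IsRightDeltaLeibniz mul δ) {x : M}
    (hx : mul x (mul x x) = 0) : mul (mul x x) (mul x x) = 0 := by
  rw [hR x x (mul x x), hx, map_zero, LinearMap.zero_apply, zero_add, map_zero, smul_zero]

theorem sq_mul_sq_eq_sq_mul_mul (hR : IsRightDeltaLeibniz mul δ) (hδ : 2 * δ = 1) (x : M) :
    mul (mul x x) (mul x x) = mul (mul (mul x x) x) x := by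
  have h := hR (mul x x) x x
  linear_combination (norm := module) (-2 : R) • h - hδ • (mul (mul x x) (mul x x)
    + mul (mul (mul x x) x) x)

end DeltaLeibniz

/-- Let A be a symmetric δ-Leibniz algebra over ℂ. Then
(A) if δ ≠ 1/2 then x²x = 0, xx² = 0 and x²x² = 0 (A is a nilalgebra of
nilindex 3); (B) if δ = 1/2 then x²x = xx² and x²x² = (x²x)x (so A is
power-associative by Albert's criterion). -/
theorem symmetric_deltaLeibniz_nil_or_powerAssociative
    (A : Type*) [AddCommGroup A] [Module ℂ A]
    (mul : A →ₗ[ℂ] A →ₗ[ℂ] A) (δ : ℂ)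
    (rightL : ∀ x y z : A,
      mul (mul x y) z = δ • (mul (mul x z) y + mul x (mul y z)))
    (leftL : ∀ x y z : A,
      mul x (mul y z) = δ • (mul (mul x y) z + mul y (mul x z))) :
    (δ ≠ 1/2 → ∀ x : A,
        mul (mul x x) x = 0 ∧ mul x (mul x x) = 0 ∧
        mul (mul x x) (mul x x) = 0) ∧
    (δ = 1/2 → ∀ x : A,
        mul (mul x x) x = mul x (mul x x) ∧
        mul (mul x x) (mul x x) = mul (mul (mul x x) x) x) := by
  refine ⟨fun hδ x => ?_, fun hδ x => ⟨sq_mul_eq_mul_sq rightL leftL x, ?_⟩⟩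
  · have hunit : IsUnit (1 - 2 * δ) :=
      Ne.isUnit fun h => hδ (by linear_combination -h / 2)
    have hx : mul (mul x x) x = 0 := sq_mul_eq_zero rightL leftL hunit x
    have hx' : mul x (mul x x) = 0 := (sq_mul_eq_mul_sq rightL leftL x).symm.trans hx
    exact ⟨hx, hx', sq_mul_sq_eq_zero rightL hx'⟩
  · exact sq_mul_sq_eq_sq_mul_mul rightL (by rw [hδ]; norm_num) x
end

section
/- Let A be a symmetric δ-Leibniz algebra over ℂ and define [x,y] := x*y − y*x. Then (A, [·,·]) is a δ-Lie algebra: [x,y] = −[y,x] and [[x,y],z] = δ*([[x,z],y] + [x,[y,z]]) for all x, y, z ∈ A. Moreover, if δ ∉ {1, −1/2}, then [[x,y],z] = 0 for all x, y, z ∈ A, i.e., (A, [·,·]) is a 2-step nilpotent Lie algebra. -/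
/-!
The δ-Lie identity for `[x, y] = x * y - y * x` is the sum of two instances of the right and two of
the left δ-Leibniz identity. For nilpotency, a combination of the twelve instances of the two
identities at the permutations of `x, y, z` gives `(δ - 1)(2δ + 1) • [[x, y], z] = 0`.
-/

section

variable {R M : Type*} [CommRing R] [AddCommGroup M] [Module R M]

def IsRightLeibniz (mul : M →ₗ[R] M →ₗ[R] M) (δ : R) : Prop :=
  ∀ x y z : M, mul (mul x y) z = δ • (mul (mul x z) y + mul x (mul y z))

def IsLeftLeibniz (mul : M →ₗ[R] M →ₗ[R] M) (δ : R) : Prop :=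
  ∀ x y z : M, mul x (mul y z) = δ • (mul (mul x y) z + mul y (mul x z))

namespace IsRightLeibniz

variable {mul : M →ₗ[R] M →ₗ[R] M} {δ : R}

/-- For an anticommutative bracket, the right δ-Leibniz identity is the δ-Lie identity. -/
theorem commutator (hr : IsRightLeibniz mul δ) (hl : IsLeftLeibniz mul δ) :
    IsRightLeibniz (mul - mul.flip) δ := by
  intro x y z
  simp only [LinearMap.sub_apply, LinearMap.flip_apply, map_sub]
  linear_combination (norm := module) hr x y z - hr y x z - hl z x y + hl z y x

theorem smul_commutator_commutator_eq_zero (hr : IsRightLeibniz mul δ)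
    (hl : IsLeftLeibniz mul δ) (x y z : M) :
    ((δ - 1) * (2 * δ + 1)) • (mul - mul.flip) ((mul - mul.flip) x y) z = 0 := by
  simp only [LinearMap.sub_apply, LinearMap.flip_apply, map_sub]
  linear_combination (norm := module)
    (-(1 + δ)) • hr x y z + (-δ) • hr x z y + (1 + δ) • hr y x z +
    δ • hr y z x + δ • hr z x y + (-δ) • hr z y x +
    (-δ) • hl x y z + δ • hl x z y + δ • hl y x z +
    (-δ) • hl y z x + (1 + δ) • hl z x y + (-(1 + δ)) • hl z y x

theorem commutator_commutator_eq_zero [IsDomain R] [Module.IsTorsionFree R M]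
    (hr : IsRightLeibniz mul δ) (hl : IsLeftLeibniz mul δ) (hδ₁ : δ ≠ 1)
    (hδ₂ : 2 * δ + 1 ≠ 0) (x y z : M) :
    (mul - mul.flip) ((mul - mul.flip) x y) z = 0 :=
  (smul_eq_zero_iff_right (mul_ne_zero (sub_ne_zero.mpr hδ₁) hδ₂)).mp
    (hr.smul_commutator_commutator_eq_zero hl x y z)

end IsRightLeibniz

end

/-- For a symmetric δ-Leibniz algebra over ℂ, the commutator
[x,y] := x*y − y*x makes it a δ-Lie algebra; moreover if δ ∉ {1, −1/2} the
resulting bracket is 2-step nilpotent. -/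
theorem symmetric_deltaLeibniz_commutator_deltaLie
    (A : Type*) [AddCommGroup A] [Module ℂ A]
    (mul : A →ₗ[ℂ] A →ₗ[ℂ] A) (δ : ℂ)
    (rightL : ∀ x y z : A,
      mul (mul x y) z = δ • (mul (mul x z) y + mul x (mul y z)))
    (leftL : ∀ x y z : A,
      mul x (mul y z) = δ • (mul (mul x y) z + mul y (mul x z))) :
    (∀ x y : A, mul x y - mul y x = -(mul y x - mul x y)) ∧
    (∀ x y z : A,
      mul (mul x y - mul y x) z - mul z (mul x y - mul y x)
        = δ • ((mul (mul x z - mul z x) y - mul y (mul x z - mul z x)) +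
               (mul x (mul y z - mul z y) - mul (mul y z - mul z y) x))) ∧
    (δ ≠ 1 → δ ≠ -(1/2) → ∀ x y z : A,
      mul (mul x y - mul y x) z - mul z (mul x y - mul y x) = 0) := by
  refine ⟨fun x y => (neg_sub _ _).symm, fun x y z => ?_, fun hδ₁ hδ₂ x y z => ?_⟩
  · simpa using IsRightLeibniz.commutator rightL leftL x y z
  · have hδ₂' : 2 * δ + 1 ≠ 0 := fun h => hδ₂ (by linear_combination h / 2)
    simpa using IsRightLeibniz.commutator_commutator_eq_zero rightL leftL hδ₁ hδ₂' x y z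
end

section
/- Let Z be a δ-Zinbiel algebra over ℂ with δ ≠ 0. Then Z is Lie admissible (the commutator [a,b] := a*b − b*a satisfies the Jacobi identity) if and only if δ = 1/2 or Z satisfies x*(y*z) − y*(x*z) + y*(z*x) − z*(y*x) + z*(x*y) − x*(z*y) = 0 for all x, y, z ∈ Z. -/
/-! Solving the δ-Zinbiel identity for `(a * b) * c` (possible as `δ ≠ 0`) rewrites every
product of the form `(a * b) * c` in the Jacobi sum of commutators as a combination of
products `a * (b * c)`; collecting terms, the Jacobi sum becomes `(δ⁻¹ - 2)` times the
alternating six-term sum of the statement. -/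

section DeltaZinbiel

variable {K M : Type*} [Field K] [AddCommGroup M] [Module K M]
  (mul : M →ₗ[K] M →ₗ[K] M) {δ : K}

theorem mul_mul_eq_of_deltaZinbiel (hδ : δ ≠ 0)
    (hZ : ∀ x y z : M, mul x (mul y z) = δ • (mul (mul x y) z - mul x (mul z y)))
    (a b c : M) : mul (mul a b) c = δ⁻¹ • mul a (mul b c) + mul a (mul c b) := by
  rw [hZ a b c, inv_smul_smul₀ hδ, sub_add_cancel]

theorem jacobi_sum_eq_smul_of_deltaZinbiel (hδ : δ ≠ 0)
    (hZ : ∀ x y z : M, mul x (mul y z) = δ • (mul (mul x y) z - mul x (mul z y)))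
    (x y z : M) :
    (mul (mul x y - mul y x) z - mul z (mul x y - mul y x)) +
        (mul (mul y z - mul z y) x - mul x (mul y z - mul z y)) +
        (mul (mul z x - mul x z) y - mul y (mul z x - mul x z)) =
      (δ⁻¹ - 2) • (mul x (mul y z) - mul y (mul x z) + mul y (mul z x) -
        mul z (mul y x) + mul z (mul x y) - mul x (mul z y)) := by
  simp only [map_sub, LinearMap.sub_apply, mul_mul_eq_of_deltaZinbiel mul hδ hZ]
  module

end DeltaZinbiel

/-- A δ-Zinbiel algebra over ℂ with δ ≠ 0 is Lie admissible iff
δ = 1/2 or it satisfies x(yz) − y(xz) + y(zx) − z(yx) + z(xy) − x(zy) = 0. -/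
theorem deltaZinbiel_lieAdmissible_iff
    (Z : Type*) [AddCommGroup Z] [Module ℂ Z]
    (mul : Z →ₗ[ℂ] Z →ₗ[ℂ] Z) (δ : ℂ) (hδ : δ ≠ 0)
    (hZ : ∀ x y z : Z,
      mul x (mul y z) = δ • (mul (mul x y) z - mul x (mul z y))) :
    (∀ x y z : Z,
        (mul (mul x y - mul y x) z - mul z (mul x y - mul y x)) +
        (mul (mul y z - mul z y) x - mul x (mul y z - mul z y)) +
        (mul (mul z x - mul x z) y - mul y (mul z x - mul x z)) = 0) ↔
    (δ = 1/2 ∨ ∀ x y z : Z,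
        mul x (mul y z) - mul y (mul x z) + mul y (mul z x) - mul z (mul y x) +
          mul z (mul x y) - mul x (mul z y) = 0) := by
  have hcoeff : δ⁻¹ - 2 = 0 ↔ δ = 1 / 2 := by
    rw [sub_eq_zero, inv_eq_iff_eq_inv, one_div]
  simp only [jacobi_sum_eq_smul_of_deltaZinbiel mul hδ hZ, smul_eq_zero, hcoeff,
    forall_or_left]
end
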